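/- Suppose in an MDP with rewards in [0,1] and discount γ ∈ [0,1), an action a_w available in every state gives expected immediate reward 1, and every task action a gives expected immediate reward at most r_task < 1. Then for every state s and every task action a, Q*(s, a_w) - Q*(s, a) ≥ 1 - r_task > 0; in particular the optimal policy never takes a task action. -/

import Mathlib

/-! The wireheading action alone already earns reward `1` forever, and no action can earn more,
so the optimal value is the constant `1 / (1 - γ)`. With a constant continuation value every
action has the same expected future, and `Q s aw - Q s a` collapses to the reward gap
`1 - r s a ≥ 1 - rtask`. -/

open Set

section BoundedFixedPoint

variable {S : Type*} {V : S → ℝ} {γ c : ℝ}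

lemma le_div_one_sub_of_le_add_mul_iSup (hγ : γ < 1) (hV : BddAbove (range V))
    (h : ∀ s, V s ≤ c + γ * ⨆ s, V s) (s : S) : V s ≤ c / (1 - γ) := by
  have : Nonempty S := ⟨s⟩
  have hsup : ⨆ s, V s ≤ c + γ * ⨆ s, V s := ciSup_le h
  calc V s ≤ ⨆ s, V s := le_ciSup hV s
    _ ≤ c / (1 - γ) := by rw [le_div_iff₀ (by linarith)]; linarith

lemma div_one_sub_le_of_add_mul_iInf_le (hγ : γ < 1) (hV : BddBelow (range V))
    (h : ∀ s, c + γ * ⨅ s, V s ≤ V s) (s : S) : c / (1 - γ) ≤ V s := by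
  have : Nonempty S := ⟨s⟩
  have hinf : c + γ * ⨅ s, V s ≤ ⨅ s, V s := le_ciInf h
  calc c / (1 - γ) ≤ ⨅ s, V s := by rw [div_le_iff₀ (by linarith)]; linarith
    _ ≤ V s := ciInf_le hV s

end BoundedFixedPoint

section Mean

variable {S : Type*} {E : (S → ℝ) → ℝ}
  (hmono : ∀ f g : S → ℝ, (∀ s, f s ≤ g s) → E f ≤ E g) (hconst : ∀ c : ℝ, E (fun _ => c) = c)
include hmono hconst

lemma apply_le_iSup_of_monotone_of_const {V : S → ℝ} (hV : BddAbove (range V)) :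
    E V ≤ ⨆ s, V s := by
  simpa only [hconst] using hmono V _ (le_ciSup hV)

lemma iInf_le_apply_of_monotone_of_const {V : S → ℝ} (hV : BddBelow (range V)) :
    ⨅ s, V s ≤ E V := by
  simpa only [hconst] using hmono _ V (ciInf_le hV)

end Mean

lemma optimalValue_eq_of_reward_one {S A : Type*} {γ : ℝ} (hγ0 : 0 ≤ γ) (hγ1 : γ < 1)
    {r : S → A → ℝ} (hr : ∀ s a, r s a ≤ 1) {Exp : S → A → (S → ℝ) → ℝ}
    (hExpMono : ∀ s a (f g : S → ℝ), (∀ s', f s' ≤ g s') → Exp s a f ≤ Exp s a g)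
    (hExpConst : ∀ s a (c : ℝ), Exp s a (fun _ => c) = c)
    {Q : S → A → ℝ} {V : S → ℝ} (hBellQ : ∀ s a, Q s a = r s a + γ * Exp s a V)
    (hBellV : ∀ s, IsLUB (range (Q s)) (V s))
    (hVbddAbove : BddAbove (range V)) (hVbddBelow : BddBelow (range V))
    {aw : A} (hw : ∀ s, r s aw = 1) :
    V = fun _ => 1 / (1 - γ) := by
  have hV_le : ∀ s, V s ≤ 1 / (1 - γ) := by
    refine le_div_one_sub_of_le_add_mul_iSup hγ1 hVbddAbove fun s => (hBellV s).2 ?_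
    rintro _ ⟨a, rfl⟩
    rw [hBellQ]
    gcongr
    · exact hr s a
    · exact apply_le_iSup_of_monotone_of_const (hExpMono s a) (hExpConst s a) hVbddAbove
  have hV_ge : ∀ s, 1 / (1 - γ) ≤ V s := by
    refine div_one_sub_le_of_add_mul_iInf_le hγ1 hVbddBelow fun s => ?_
    calc 1 + γ * ⨅ s, V s
        ≤ r s aw + γ * Exp s aw V := by
          rw [hw]
          gcongr
          exact iInf_le_apply_of_monotone_of_const (hExpMono s aw) (hExpConst s aw) hVbddBelow
      _ = Q s aw := (hBellQ s aw).symm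
      _ ≤ V s := (hBellV s).1 ⟨aw, rfl⟩
  exact funext fun s => le_antisymm (hV_le s) (hV_ge s)

theorem stmt2_general {S A : Type*}
    (γ rtask : ℝ) (hγ0 : 0 ≤ γ) (hγ1 : γ < 1)
    (hrt1 : rtask < 1)
    (r : S → A → ℝ) (hr : ∀ s a, 0 ≤ r s a ∧ r s a ≤ 1)
    -- expected value over the next-state distribution of s,a
    (Exp : S → A → (S → ℝ) → ℝ)
    (hExpMono : ∀ s a (f g : S → ℝ), (∀ s', f s' ≤ g s') → Exp s a f ≤ Exp s a g)
    (hExpConst : ∀ s a (c : ℝ), Exp s a (fun _ => c) = c)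
    -- Bellman optimality equations
    (Q : S → A → ℝ) (V : S → ℝ)
    (hBellQ : ∀ s a, Q s a = r s a + γ * Exp s a V)
    (hBellV : ∀ s, IsLUB (Set.range (Q s)) (V s))
    (hVbddAbove : BddAbove (Set.range V)) (hVbddBelow : BddBelow (Set.range V))
    (aw : A) (Atask : Set A)
    (hw : ∀ s, r s aw = 1)
    (ht : ∀ s, ∀ a ∈ Atask, r s a ≤ rtask) :
    ∀ s, ∀ a ∈ Atask, 1 - rtask ≤ Q s aw - Q s a ∧ Q s a < Q s aw := by
  intro s a ha
  have hV : V = fun _ => 1 / (1 - γ) :=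
    optimalValue_eq_of_reward_one hγ0 hγ1 (fun s a => (hr s a).2) hExpMono hExpConst hBellQ
      hBellV hVbddAbove hVbddBelow hw
  have hgap : Q s aw - Q s a = 1 - r s a := by
    rw [hBellQ, hBellQ, hV, hExpConst, hExpConst, hw]
    ring
  constructor <;> linarith [ht s a ha]

/-- Wireheading dominance: in an MDP with rewards in [0,1], a wireheading action
with expected immediate reward 1 available in every state dominates every task
action (expected immediate reward ≤ rtask < 1) by at least 1 - rtask in optimal
Q-value; in particular the optimal policy never takes a task action. -/
theorem stmt2 {S A : Type*} [Nonempty S]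
    (γ rtask : ℝ) (hγ0 : 0 ≤ γ) (hγ1 : γ < 1)
    (hrt0 : 0 ≤ rtask) (hrt1 : rtask < 1)
    (r : S → A → ℝ) (hr : ∀ s a, 0 ≤ r s a ∧ r s a ≤ 1)
    -- expected value over the next-state distribution of s,a
    (Exp : S → A → (S → ℝ) → ℝ)
    (hExpMono : ∀ s a (f g : S → ℝ), (∀ s', f s' ≤ g s') → Exp s a f ≤ Exp s a g)
    (hExpConst : ∀ s a (c : ℝ), Exp s a (fun _ => c) = c)
    -- Bellman optimality equations
    (Q : S → A → ℝ) (V : S → ℝ)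
    (hBellQ : ∀ s a, Q s a = r s a + γ * Exp s a V)
    (hBellV : ∀ s, IsLUB (Set.range (Q s)) (V s))
    (hVbddAbove : BddAbove (Set.range V)) (hVbddBelow : BddBelow (Set.range V))
    (aw : A) (Atask : Set A)
    (hw : ∀ s, r s aw = 1)
    (ht : ∀ s, ∀ a ∈ Atask, r s a ≤ rtask) :
    ∀ s, ∀ a ∈ Atask, 1 - rtask ≤ Q s aw - Q s a ∧ Q s a < Q s aw :=
  stmt2_general γ rtask hγ0 hγ1 hrt1 r hr Exp hExpMono hExpConst Q V hBellQ hBellV hVbddAbove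
    hVbddBelow aw Atask hw ht
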